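/- arXiv:0907.3319 — 6 statements merged into one kernel-verified Lean document; each statement's English description precedes it below -/
import Mathlib

section
/- Let q ≥ 2. For every pair (i,j), the polynomial Π^{q-2} divides the (i,j) entry of the adjugate matrix adj(Ĵ), and the quotient adj(Ĵ)_{i,j} / Π^{q-2} is a homogeneous polynomial of degree q² − q + 1. -/
open MvPolynomial

/-- The product `Π = ∏_{(a,b)} X_{a,b}` of all the variables. -/
noncomputable def PiProd (q : ℕ) : MvPolynomial (Fin q × Fin q) ℂ :=
  ∏ p : Fin q × Fin q, X p

/-- The homogeneous representation `Ĵ` of the Hadamard inverse: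
`Ĵ_{i,j} = ∏_{(a,b) ≠ (i,j)} X_{a,b}`. -/
noncomputable def Jhat (q : ℕ) : Matrix (Fin q) (Fin q) (MvPolynomial (Fin q × Fin q) ℂ) :=
  Matrix.of fun i j => ∏ p ∈ Finset.univ.erase (i, j), X p

lemma X_mul_Jhat (q : ℕ) (p : Fin q × Fin q) :
    X p * Jhat q p.1 p.2 = PiProd q := by
  simpa [Jhat, PiProd] using Finset.mul_prod_erase Finset.univ X (Finset.mem_univ p)

lemma prod_Jhat (q : ℕ) (hq : 2 ≤ q) (i : Fin q) (σ : Equiv.Perm (Fin q)) :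
    ∏ a ∈ Finset.univ.erase i, Jhat q (σ a) a
      = PiProd q ^ (q - 2) *
        ∏ p ∈ ((Finset.univ.erase i).image (fun a => (σ a, a)))ᶜ, X p := by
  classical
  set S := (Finset.univ.erase i).image (fun a : Fin q => (σ a, a)) with hS
  have hinj : Function.Injective (fun a : Fin q => (σ a, a)) := by
    intro a b h
    exact congrArg Prod.snd h
  have hP : (∏ a ∈ Finset.univ.erase i, (X ((σ a, a)) : MvPolynomial (Fin q × Fin q) ℂ))
      = ∏ p ∈ S, X p := by
    rw [hS, Finset.prod_image (fun a _ b _ h => hinj h)]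
  have hPne : (∏ p ∈ S, X p : MvPolynomial (Fin q × Fin q) ℂ) ≠ 0 :=
    Finset.prod_ne_zero_iff.2 fun p _ => X_ne_zero p
  apply mul_left_cancel₀ hPne
  have lhs : (∏ p ∈ S, X p) * ∏ a ∈ Finset.univ.erase i, Jhat q (σ a) a
      = PiProd q ^ (q - 1) := by
    rw [← hP, ← Finset.prod_mul_distrib]
    have : ∀ a ∈ Finset.univ.erase i,
        X ((σ a, a) : Fin q × Fin q) * Jhat q (σ a) a = PiProd q := fun a _ =>
      X_mul_Jhat q (σ a, a)
    rw [Finset.prod_congr rfl this, Finset.prod_const,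
      Finset.card_erase_of_mem (Finset.mem_univ i), Finset.card_univ, Fintype.card_fin]
  rw [lhs, mul_left_comm, Finset.prod_mul_prod_compl S X]
  have : PiProd q ^ (q - 2) * PiProd q = PiProd q ^ (q - 1) := by
    rw [← pow_succ]
    congr 1
    omega
  rw [← PiProd, this]

lemma term_eq (q : ℕ) (i j : Fin q) (σ : Equiv.Perm (Fin q)) :
    ∏ a, ((Jhat q).updateRow j (Pi.single i (1 : MvPolynomial (Fin q × Fin q) ℂ))) (σ a) a
      = if σ i = j then ∏ a ∈ Finset.univ.erase i, Jhat q (σ a) a else 0 := by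
  classical
  by_cases h : σ i = j
  · rw [if_pos h, ← Finset.mul_prod_erase Finset.univ _ (Finset.mem_univ i)]
    have h1 : ((Jhat q).updateRow j (Pi.single i (1 : MvPolynomial (Fin q × Fin q) ℂ))) (σ i) i
        = 1 := by
      rw [h, Matrix.updateRow_self, Pi.single_eq_same]
    rw [h1, one_mul]
    refine Finset.prod_congr rfl fun a ha => ?_
    have hne : σ a ≠ j := by
      intro hc
      exact (Finset.mem_erase.1 ha).1 (σ.injective (hc.trans h.symm))
    rw [Matrix.updateRow_ne hne]
  · rw [if_neg h]
    refine Finset.prod_eq_zero (Finset.mem_univ (σ.symm j)) ?_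
    have h2 : σ (σ.symm j) = j := σ.apply_symm_apply j
    rw [h2, Matrix.updateRow_self, Pi.single_eq_of_ne]
    intro hc
    exact h (by rw [← hc, h2])

/-- For `q ≥ 2`, each entry of `adj(Ĵ)` is divisible by `Π^{q-2}`, and the quotient is a
homogeneous polynomial of degree `q² − q + 1`. -/
theorem adjugate_Jhat_eq_pow_mul_homogeneous (q : ℕ) (hq : 2 ≤ q) (i j : Fin q) :
    ∃ Kij : MvPolynomial (Fin q × Fin q) ℂ,
      (Jhat q).adjugate i j = PiProd q ^ (q - 2) * Kij ∧
      Kij.IsHomogeneous (q ^ 2 - q + 1) := by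
  classical
  refine ⟨∑ σ : Equiv.Perm (Fin q),
      if σ i = j then
        ((Equiv.Perm.sign σ : ℤ) : MvPolynomial (Fin q × Fin q) ℂ) *
          ∏ p ∈ ((Finset.univ.erase i).image (fun a => (σ a, a)))ᶜ, X p
      else 0, ?_, ?_⟩
  · rw [Matrix.adjugate_apply, Matrix.det_apply', Finset.mul_sum]
    refine Finset.sum_congr rfl fun σ _ => ?_
    rw [term_eq]
    by_cases h : σ i = j
    · rw [if_pos h, if_pos h, prod_Jhat q hq i σ]
      ring
    · simp [h]
  · refine MvPolynomial.IsHomogeneous.sum _ _ _ fun σ _ => ?_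
    by_cases h : σ i = j
    · rw [if_pos h]
      have hcard : (((Finset.univ.erase i).image (fun a => ((σ a, a) : Fin q × Fin q)))ᶜ).card
          = q ^ 2 - q + 1 := by
        rw [Finset.card_compl, Finset.card_image_of_injective _
          (fun a b hab => congrArg Prod.snd hab),
          Finset.card_erase_of_mem (Finset.mem_univ i), Finset.card_univ, Fintype.card_fin,
          Fintype.card_prod, Fintype.card_fin]
        have h1 : q ≤ q * q := Nat.le_mul_of_pos_left q (by omega)
        rw [pow_two]
        omega
      have hprod : (∏ p ∈ ((Finset.univ.erase i).image
            (fun a => ((σ a, a) : Fin q × Fin q)))ᶜ, (X p : MvPolynomial (Fin q × Fin q) ℂ)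
          ).IsHomogeneous (q ^ 2 - q + 1) := by
        rw [← hcard]
        have := MvPolynomial.IsHomogeneous.prod
          (((Finset.univ.erase i).image (fun a => ((σ a, a) : Fin q × Fin q)))ᶜ)
          (fun p => (X p : MvPolynomial (Fin q × Fin q) ℂ)) (fun _ => 1)
          (fun p _ => isHomogeneous_X _ p)
        simpa using this
      rw [show ((Equiv.Perm.sign σ : ℤ) : MvPolynomial (Fin q × Fin q) ℂ)
          = C ((Equiv.Perm.sign σ : ℤ) : ℂ) from (map_intCast (C : ℂ →+* _) _).symm]
      exact hprod.C_mul _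
    · rw [if_neg h]
      exact isHomogeneous_zero _ _ _
end

section
/- Let q ≥ 2 and for each (i,j) let K̂_{i,j} ∈ R be the polynomial with adj(Ĵ)_{i,j} = Π^{q-2} · K̂_{i,j}. Then the family {K̂_{i,j}} has no common non-unit factor: every polynomial d ∈ R that divides K̂_{i,j} for all (i,j) is a nonzero constant. (Consequently the algebraic degree of the birational map K = I ∘ J of P(M_q) is q² − q + 1.) -/
open MvPolynomial

section Aux

variable {σ : Type*} [DecidableEq σ]

/-- The equivalence isolating the variable `v`. -/
noncomputable def isoAt (v : σ) :
    MvPolynomial σ ℂ ≃ₐ[ℂ] Polynomial (MvPolynomial {b : σ // b ≠ v} ℂ) :=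
  (renameEquiv ℂ (Equiv.optionSubtypeNe v).symm).trans
    (optionEquivLeft ℂ {b : σ // b ≠ v})

lemma isoAt_rename (v : σ) (c : MvPolynomial {b : σ // b ≠ v} ℂ) :
    isoAt v (rename Subtype.val c) = Polynomial.C c := by
  have h : ((isoAt v).toAlgHom.comp
      (rename (Subtype.val : {b : σ // b ≠ v} → σ)))
      = Polynomial.CAlgHom := by
    apply MvPolynomial.algHom_ext
    intro u
    simp only [AlgHom.coe_comp, AlgEquiv.toAlgHom_eq_coe, AlgHom.coe_coe, Function.comp_apply,
      rename_X, isoAt, AlgEquiv.trans_apply, renameEquiv_apply]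
    erw [AlgEquiv.trans_apply, renameEquiv_apply, rename_X]
    rw [Equiv.optionSubtypeNe_symm_of_ne u.2, Subtype.eta]
    simp [optionEquivLeft_X_some, Polynomial.CAlgHom]
  have := congrArg (fun f => f c) (congrArg DFunLike.coe h)
  simpa [Polynomial.CAlgHom] using this

lemma isoAt_X_self (v : σ) : isoAt v (X v) = Polynomial.X := by
  simp only [isoAt, AlgEquiv.trans_apply, renameEquiv_apply, rename_X,
    Equiv.optionSubtypeNe_symm_self, optionEquivLeft_X_none]

lemma mv_prime_X (v : σ) : Prime (X v : MvPolynomial σ ℂ) := by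
  rw [← MulEquiv.prime_iff (isoAt v)]
  show Prime (isoAt v (X v))
  rw [isoAt_X_self]
  exact Polynomial.prime_X

/-- Divisors of a polynomial not involving `v` do not involve `v`. -/
lemma not_mem_vars_of_dvd {f g : MvPolynomial σ ℂ} (hf : f ≠ 0)
    (hdvd : g ∣ f) {v : σ} (hvf : v ∉ f.vars) : v ∉ g.vars := by
  have hsup : f ∈ supported ℂ {b : σ | b ≠ v} := by
    rw [mem_supported]
    intro x hx
    simp only [Set.mem_setOf_eq]
    rintro rfl
    exact hvf hx
  rw [supported_eq_range_rename] at hsup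
  obtain ⟨f₀, hf₀⟩ := hsup
  have hef : isoAt v f = Polynomial.C f₀ := by
    rw [← hf₀]; exact isoAt_rename v f₀
  have hef0 : isoAt v f ≠ 0 := by
    intro h
    exact hf (by simpa using congrArg (isoAt v).symm h)
  have hdeg : (isoAt v g).natDegree = 0 := by
    have h1 : (isoAt v g).natDegree ≤ (isoAt v f).natDegree :=
      Polynomial.natDegree_le_of_dvd (map_dvd (isoAt v) hdvd) hef0
    rw [hef] at h1
    have h0 : (Polynomial.C f₀ : Polynomial (MvPolynomial {b : σ // b ≠ v} ℂ)).natDegree = 0 :=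
      Polynomial.natDegree_C _
    omega
  obtain ⟨c, hc⟩ := Polynomial.natDegree_eq_zero.mp hdeg
  have hg : g = rename Subtype.val c := by
    apply (isoAt v).injective
    rw [isoAt_rename v c, ← hc]
  rw [hg]
  intro hvg
  obtain ⟨u, _, hu⟩ := mem_vars_rename _ _ hvg
  exact u.2 hu

end Aux

section Main

variable (q : ℕ)

/-- The graph of `σ` restricted away from `i`. -/
noncomputable def Tset (i : Fin q) (σ : Equiv.Perm (Fin q)) : Finset (Fin q × Fin q) :=
  (Finset.univ.erase i).image fun k => (σ k, k)

noncomputable def Wpoly (i : Fin q) (σ : Equiv.Perm (Fin q)) :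
    MvPolynomial (Fin q × Fin q) ℂ :=
  ∏ p ∈ Finset.univ \ Tset q i σ, X p

noncomputable def K0 (i j : Fin q) : MvPolynomial (Fin q × Fin q) ℂ :=
  ∑ σ ∈ Finset.univ.filter (fun σ : Equiv.Perm (Fin q) => σ i = j),
    ((Equiv.Perm.sign σ : ℤ) : MvPolynomial (Fin q × Fin q) ℂ) * Wpoly q i σ

lemma PiProd_ne_zero : PiProd q ≠ 0 := by
  rw [PiProd, Finset.prod_ne_zero_iff]
  exact fun p _ => X_ne_zero p

lemma prod_jhat (hq : 2 ≤ q) (i : Fin q) (σ : Equiv.Perm (Fin q)) :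
    ∏ k ∈ Finset.univ.erase i, Jhat q (σ k) k = PiProd q ^ (q - 2) * Wpoly q i σ := by
  have hinj : Set.InjOn (fun k : Fin q => ((σ k, k) : Fin q × Fin q)) (Finset.univ.erase i) :=
    fun a _ b _ h => congrArg Prod.snd h
  have hX : (∏ k ∈ Finset.univ.erase i, X ((σ k, k) : Fin q × Fin q)
      : MvPolynomial (Fin q × Fin q) ℂ) ≠ 0 := by
    rw [Finset.prod_ne_zero_iff]; exact fun p _ => X_ne_zero _
  apply mul_right_cancel₀ hX
  have hL : (∏ k ∈ Finset.univ.erase i, Jhat q (σ k) k) *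
      (∏ k ∈ Finset.univ.erase i, X ((σ k, k) : Fin q × Fin q)) = PiProd q ^ (q - 1) := by
    rw [← Finset.prod_mul_distrib]
    have h1 : ∀ k ∈ Finset.univ.erase i,
        Jhat q (σ k) k * X ((σ k, k) : Fin q × Fin q) = PiProd q := by
      intro k _
      show (∏ p ∈ Finset.univ.erase (σ k, k), X p) * X ((σ k, k) : Fin q × Fin q) = PiProd q
      exact Finset.prod_erase_mul _ _ (Finset.mem_univ _)
    rw [Finset.prod_congr rfl h1, Finset.prod_const,
      Finset.card_erase_of_mem (Finset.mem_univ i), Finset.card_univ, Fintype.card_fin]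
  have hR : Wpoly q i σ * (∏ k ∈ Finset.univ.erase i, X ((σ k, k) : Fin q × Fin q))
      = PiProd q := by
    rw [Wpoly, show (∏ k ∈ Finset.univ.erase i, X ((σ k, k) : Fin q × Fin q)
        : MvPolynomial (Fin q × Fin q) ℂ) = ∏ p ∈ Tset q i σ, X p from
      (Finset.prod_image (fun a ha b hb h => hinj ha hb h)).symm]
    exact Finset.prod_sdiff (Finset.subset_univ _)
  rw [hL, mul_assoc, hR, ← pow_succ]
  congr 1
  omega

set_option maxHeartbeats 1000000 in
lemma adj_eq (hq : 2 ≤ q) (i j : Fin q) :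
    (Jhat q).adjugate i j = PiProd q ^ (q - 2) * K0 q i j := by
  rw [Matrix.adjugate_apply, Matrix.det_apply']
  have hterm : ∀ σ : Equiv.Perm (Fin q),
      ((Equiv.Perm.sign σ : ℤ) : MvPolynomial (Fin q × Fin q) ℂ) *
        ∏ k, ((Jhat q).updateRow j (Pi.single i 1)) (σ k) k =
      if σ i = j then ((Equiv.Perm.sign σ : ℤ) : MvPolynomial (Fin q × Fin q) ℂ) *
        (PiProd q ^ (q - 2) * Wpoly q i σ) else 0 := by
    intro σ
    by_cases hσ : σ i = j
    · rw [if_pos hσ]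
      congr 1
      have hsplit : ∏ k, ((Jhat q).updateRow j (Pi.single i 1)) (σ k) k =
          ∏ k ∈ Finset.univ.erase i, Jhat q (σ k) k := by
        rw [← Finset.mul_prod_erase Finset.univ _ (Finset.mem_univ i)]
        have hfi : ((Jhat q).updateRow j (Pi.single i 1)) (σ i) i = 1 := by
          rw [Matrix.updateRow_apply, if_pos hσ]
          exact Pi.single_eq_same i 1
        rw [hfi, one_mul]
        apply Finset.prod_congr rfl
        intro k hk
        rw [Matrix.updateRow_apply, if_neg]
        intro hkj
        exact (Finset.mem_erase.mp hk).1 (σ.injective (hkj.trans hσ.symm))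
      rw [hsplit, prod_jhat q hq i σ]
    · rw [if_neg hσ]
      have h0 : ((Jhat q).updateRow j (Pi.single i 1)) (σ (σ.symm j)) (σ.symm j) = 0 := by
        rw [Equiv.apply_symm_apply, Matrix.updateRow_apply, if_pos rfl]
        apply Pi.single_eq_of_ne
        intro h
        exact hσ (by rw [← h, Equiv.apply_symm_apply])
      have hz : (∏ k, ((Jhat q).updateRow j (Pi.single i 1)) (σ k) k) = 0 :=
        Finset.prod_eq_zero (Finset.mem_univ (σ.symm j)) h0
      rw [hz, mul_zero]
  calc (∑ σ : Equiv.Perm (Fin q), ((Equiv.Perm.sign σ : ℤ) : MvPolynomial (Fin q × Fin q) ℂ) *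
        ∏ k, ((Jhat q).updateRow j (Pi.single i 1)) (σ k) k)
      = ∑ σ : Equiv.Perm (Fin q), if σ i = j then
          ((Equiv.Perm.sign σ : ℤ) : MvPolynomial (Fin q × Fin q) ℂ) *
            (PiProd q ^ (q - 2) * Wpoly q i σ) else 0 :=
        Finset.sum_congr rfl fun σ _ => hterm σ
    _ = ∑ σ ∈ Finset.univ.filter (fun σ : Equiv.Perm (Fin q) => σ i = j),
          ((Equiv.Perm.sign σ : ℤ) : MvPolynomial (Fin q × Fin q) ℂ) *
            (PiProd q ^ (q - 2) * Wpoly q i σ) := (Finset.sum_filter _ _).symm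
    _ = PiProd q ^ (q - 2) * K0 q i j := by
        rw [K0, Finset.mul_sum]
        exact Finset.sum_congr rfl fun σ _ => by ring

noncomputable def phiev (i : Fin q) (σ₀ : Equiv.Perm (Fin q)) : Fin q × Fin q → ℂ :=
  fun p => if p ∈ Tset q i σ₀ then 0 else 1

set_option maxHeartbeats 1000000 in
lemma eval_K0 (i : Fin q) (σ₀ : Equiv.Perm (Fin q)) :
    eval (phiev q i σ₀) (K0 q i (σ₀ i)) = ((Equiv.Perm.sign σ₀ : ℤ) : ℂ) := by
  rw [K0, map_sum, Finset.sum_eq_single σ₀]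
  · rw [map_mul, map_intCast, Wpoly, map_prod]
    have h1 : ∀ p ∈ Finset.univ \ Tset q i σ₀, eval (phiev q i σ₀) (X p) = 1 := by
      intro p hp
      rw [eval_X]
      exact if_neg (Finset.mem_sdiff.mp hp).2
    rw [Finset.prod_congr rfl h1, Finset.prod_const_one, mul_one]
  · intro σ hmem hne
    have hσi : σ i = σ₀ i := (Finset.mem_filter.mp hmem).2
    obtain ⟨k, hk⟩ : ∃ k, σ k ≠ σ₀ k := by
      by_contra h
      push_neg at h
      exact hne (Equiv.ext h)
    have hki : k ≠ i := fun h => hk (by rw [h, hσi])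
    have hp0 : ((σ₀ k, k) : Fin q × Fin q) ∈ Finset.univ \ Tset q i σ := by
      rw [Finset.mem_sdiff]
      refine ⟨Finset.mem_univ _, fun hmem2 => ?_⟩
      obtain ⟨k', _, he⟩ := Finset.mem_image.mp hmem2
      have hk'k : k' = k := congrArg Prod.snd he
      subst hk'k
      exact hk (congrArg Prod.fst he)
    rw [map_mul, Wpoly, map_prod, Finset.prod_eq_zero hp0, mul_zero]
    rw [eval_X]
    apply if_pos
    exact Finset.mem_image.mpr ⟨k, Finset.mem_erase.mpr ⟨hki, Finset.mem_univ k⟩, rfl⟩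
  · intro h
    exact absurd (Finset.mem_filter.mpr ⟨Finset.mem_univ σ₀, rfl⟩ :
      σ₀ ∈ Finset.univ.filter (fun σ : Equiv.Perm (Fin q) => σ i = σ₀ i)) h

lemma sign_cast_ne_zero (σ₀ : Equiv.Perm (Fin q)) :
    ((Equiv.Perm.sign σ₀ : ℤ) : ℂ) ≠ 0 :=
  Int.cast_ne_zero.mpr (Units.ne_zero _)

lemma K0_ne_zero (i j : Fin q) : K0 q i j ≠ 0 := by
  intro h
  have h1 := eval_K0 q i (Equiv.swap i j)
  rw [Equiv.swap_apply_left, h, map_zero] at h1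
  exact sign_cast_ne_zero q _ h1.symm

noncomputable def Aset (i j : Fin q) : Finset (Fin q × Fin q) :=
  Finset.univ.filter fun p => p.1 = j ∨ p.2 = i

noncomputable def Gpoly (i j : Fin q) : MvPolynomial (Fin q × Fin q) ℂ :=
  ∑ σ ∈ Finset.univ.filter (fun σ : Equiv.Perm (Fin q) => σ i = j),
    ((Equiv.Perm.sign σ : ℤ) : MvPolynomial (Fin q × Fin q) ℂ) *
      ∏ p ∈ (Finset.univ \ Tset q i σ) \ Aset q i j, X p

lemma K0_fac (i j : Fin q) :
    K0 q i j = (∏ p ∈ Aset q i j, X p) * Gpoly q i j := by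
  rw [K0, Gpoly, Finset.mul_sum]
  apply Finset.sum_congr rfl
  intro σ hσ
  have hσi : σ i = j := (Finset.mem_filter.mp hσ).2
  have hA : Aset q i j ⊆ Finset.univ \ Tset q i σ := by
    intro p hp
    rw [Finset.mem_sdiff]
    refine ⟨Finset.mem_univ _, fun hpT => ?_⟩
    obtain ⟨k, hk, he⟩ := Finset.mem_image.mp hpT
    have hk' := Finset.mem_erase.mp hk
    rcases (Finset.mem_filter.mp hp).2 with h1 | h2
    · apply hk'.1
      apply σ.injective
      rw [hσi]
      have h5 : σ k = p.1 := congrArg Prod.fst he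
      exact h5.trans h1
    · have h6 : k = p.2 := congrArg Prod.snd he
      exact hk'.1 (h6.trans h2)
  rw [Wpoly, ← Finset.prod_sdiff hA]
  ring

lemma G_supported (i j : Fin q) :
    Gpoly q i j ∈ supported ℂ {p : Fin q × Fin q | p.1 ≠ j ∧ p.2 ≠ i} := by
  apply Subalgebra.sum_mem
  intro σ _
  apply Subalgebra.mul_mem
  · exact intCast_mem _ _
  · apply Subalgebra.prod_mem
    intro p hp
    have hpA : p ∉ Aset q i j := (Finset.mem_sdiff.mp hp).2
    rw [X_mem_supported]
    have h1 : ¬(p.1 = j ∨ p.2 = i) := fun h =>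
      hpA (Finset.mem_filter.mpr ⟨Finset.mem_univ _, h⟩)
    push_neg at h1
    exact h1

end Main

/-- For `q ≥ 2`, the family `K̂_{i,j}` defined by `adj(Ĵ)_{i,j} = Π^{q-2} · K̂_{i,j}` has no
common non-unit factor: any common divisor `d` of all the `K̂_{i,j}` is a unit,
i.e. a nonzero constant.  (Hence the algebraic degree of `K = I ∘ J` is `q² − q + 1`.) -/
theorem Khat_no_common_factor (q : ℕ) (hq : 2 ≤ q)
    (Khat : Fin q → Fin q → MvPolynomial (Fin q × Fin q) ℂ)
    (hKhat : ∀ i j : Fin q, (Jhat q).adjugate i j = PiProd q ^ (q - 2) * Khat i j)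
    (d : MvPolynomial (Fin q × Fin q) ℂ) (hd : ∀ i j : Fin q, d ∣ Khat i j) :
    IsUnit d := by
  have hKeq : ∀ i j : Fin q, Khat i j = K0 q i j := by
    intro i j
    have h1 := hKhat i j
    rw [adj_eq q hq i j] at h1
    exact mul_left_cancel₀ (pow_ne_zero _ (PiProd_ne_zero q)) h1.symm
  have hdK : ∀ i j : Fin q, d ∣ K0 q i j := fun i j => (hKeq i j) ▸ hd i j
  by_contra hdu
  let i0 : Fin q := ⟨0, by omega⟩
  have hd0 : d ≠ 0 := by
    rintro rfl
    exact K0_ne_zero q i0 i0 (zero_dvd_iff.mp (hdK i0 i0))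
  obtain ⟨r, hirr, hrd⟩ := WfDvdMonoid.exists_irreducible_factor hdu hd0
  have hpr : Prime r := UniqueFactorizationMonoid.irreducible_iff_prime.mp hirr
  have hrK : ∀ i j : Fin q, r ∣ K0 q i j := fun i j => hrd.trans (hdK i j)
  by_cases hXc : ∃ v : Fin q × Fin q, r ∣ X v
  · obtain ⟨⟨a, b⟩, hv⟩ := hXc
    obtain ⟨i, hib⟩ := Fintype.exists_ne_of_one_lt_card
      (α := Fin q) (by rw [Fintype.card_fin]; omega) b
    set σ₀ := Equiv.swap a b with hσ₀
    have hXd : (X (⟨a, b⟩ : Fin q × Fin q) : MvPolynomial (Fin q × Fin q) ℂ) ∣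
        K0 q i (σ₀ i) :=
      ((hirr.associated_of_dvd (mv_prime_X _).irreducible hv).symm.dvd).trans (hrK i (σ₀ i))
    obtain ⟨c, hc⟩ := hXd
    have he := eval_K0 q i σ₀
    rw [hc, map_mul, eval_X] at he
    have hmem : (⟨a, b⟩ : Fin q × Fin q) ∈ Tset q i σ₀ :=
      Finset.mem_image.mpr ⟨b, Finset.mem_erase.mpr ⟨Ne.symm hib, Finset.mem_univ b⟩,
        by simp [hσ₀, Equiv.swap_apply_right]⟩
    rw [show phiev q i σ₀ (a, b) = 0 from if_pos hmem, zero_mul] at he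
    exact sign_cast_ne_zero q σ₀ he.symm
  · push_neg at hXc
    have hrG : ∀ i j : Fin q, r ∣ Gpoly q i j := by
      intro i j
      have h2 := hrK i j
      rw [K0_fac] at h2
      rcases hpr.dvd_or_dvd h2 with h | h
      · obtain ⟨v, _, hvv⟩ := hpr.exists_mem_finset_dvd h
        exact absurd hvv (hXc v)
      · exact h
    have hvars : ∀ v : Fin q × Fin q, v ∉ r.vars := by
      rintro ⟨a, b⟩ hv
      have hG0 : Gpoly q b a ≠ 0 := by
        intro h
        exact K0_ne_zero q b a (by rw [K0_fac, h, mul_zero])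
      have hnv : (⟨a, b⟩ : Fin q × Fin q) ∉ (Gpoly q b a).vars := by
        intro h
        exact ((mem_supported.mp (G_supported q b a)) (Finset.mem_coe.mpr h)).1 rfl
      exact (not_mem_vars_of_dvd hG0 (hrG b a) hnv) hv
    have hsup : r ∈ supported ℂ (∅ : Set (Fin q × Fin q)) := by
      rw [mem_supported]
      intro x hx
      exact absurd (Finset.mem_coe.mp hx) (hvars x)
    rw [supported_empty, Algebra.mem_bot] at hsup
    obtain ⟨c, hc⟩ := hsup
    rcases eq_or_ne c 0 with h | h
    · rw [h, map_zero] at hc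
      exact hpr.ne_zero hc.symm
    · exact hpr.not_unit
        (hc ▸ IsUnit.map (algebraMap ℂ (MvPolynomial (Fin q × Fin q) ℂ)) h.isUnit)
end

section
/- Let q ≥ 2, let λ, ν : Fin q → ℂ satisfy λ_0 = ν_0 = 1 and λ_i ≠ 0, ν_j ≠ 0 for all i, j, and let M be the q×q matrix with M_{i,j} = λ_i⁻¹ ν_j⁻¹. Let v be a q×q matrix whose 0th row and 0th column are zero, let v₁ be the (q−1)×(q−1) matrix with (v₁)_{i,j} = v_{i+1,j+1}, and assume v₁ is invertible. Then for every s ≠ 0 the matrix M + s • v is invertible, and (M + s • v)⁻¹ = B * N * A, where N is the q×q matrix with N_{0,0} = 1, N_{0,j} = N_{i,0} = 0 for i, j ≠ 0, and N_{i,j} = s⁻¹ · (v₁⁻¹)_{i−1,j−1} for i, j ≥ 1. -/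
open Matrix


/-- The unipotent lower-triangular matrix `A` of (2.6): `A_{i,i} = 1`, `A_{i,0} = −λ_i⁻¹`
for `i ≠ 0`, all other entries `0`. -/
noncomputable def matA {q : ℕ} (hq : 0 < q) (lam : Fin q → ℂ) : Matrix (Fin q) (Fin q) ℂ :=
  Matrix.of fun i j => if i = j then 1 else if j = ⟨0, hq⟩ then -(lam i)⁻¹ else 0

/-- The unipotent upper-triangular matrix `B` of (2.6): `B_{j,j} = 1`, `B_{0,j} = −ν_j⁻¹`
for `j ≠ 0`, all other entries `0`. -/
noncomputable def matB {q : ℕ} (hq : 0 < q) (nu : Fin q → ℂ) : Matrix (Fin q) (Fin q) ℂ :=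
  Matrix.of fun i j => if i = j then 1 else if i = ⟨0, hq⟩ then -(nu j)⁻¹ else 0

/-- The lower-right `(q−1)×(q−1)` block of a `q×q` matrix: `(v₁)_{i,j} = v_{i+1,j+1}`. -/
def lowerBlock {q : ℕ} (v : Matrix (Fin q) (Fin q) ℂ) :
    Matrix (Fin (q - 1)) (Fin (q - 1)) ℂ :=
  Matrix.of fun i j =>
    v ⟨i.1 + 1, by have := i.2; omega⟩ ⟨j.1 + 1, by have := j.2; omega⟩

/-- The matrix `N`: `N_{0,0} = 1`, the rest of the `0`th row and column vanish, and
`N_{i,j} = s⁻¹ · m_{i−1,j−1}` for `i, j ≥ 1`. -/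
noncomputable def matN {q : ℕ} (hq : 2 ≤ q) (s : ℂ)
    (m : Matrix (Fin (q - 1)) (Fin (q - 1)) ℂ) : Matrix (Fin q) (Fin q) ℂ :=
  Matrix.of fun i j =>
    if i.1 = 0 then (if j.1 = 0 then 1 else 0)
    else if j.1 = 0 then 0
    else s⁻¹ * m ⟨i.1 - 1, by have := i.2; omega⟩ ⟨j.1 - 1, by have := j.2; omega⟩

section aux
variable {n : ℕ}

noncomputable def matA' (lam : Fin (n+2) → ℂ) : Matrix (Fin (n+2)) (Fin (n+2)) ℂ :=
  Matrix.of fun i j => if i = j then 1 else if j = 0 then (lam i)⁻¹ else 0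

noncomputable def matB' (nu : Fin (n+2) → ℂ) : Matrix (Fin (n+2)) (Fin (n+2)) ℂ :=
  Matrix.of fun i j => if i = j then 1 else if i = 0 then (nu j)⁻¹ else 0

noncomputable def matE (n : ℕ) : Matrix (Fin (n+2)) (Fin (n+2)) ℂ :=
  Matrix.of fun i j => if i = 0 then (if j = 0 then 1 else 0) else 0

lemma matA_mul_matA' (lam : Fin (n+2) → ℂ) :
    matA (by omega) lam * matA' lam = 1 := by
  ext i j
  rw [Matrix.mul_apply, Fin.sum_univ_succ]
  simp only [matA, matA', Matrix.of_apply, Fin.mk_zero]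
  induction i using Fin.cases with
  | zero =>
    simp only [Fin.succ_ne_zero, (Fin.succ_ne_zero _).symm, Matrix.one_apply]
    rcases eq_or_ne j 0 with rfl | h
    · simp [Fin.succ_ne_zero, (Fin.succ_ne_zero _).symm]
    · simp [h, Ne.symm h, Fin.succ_ne_zero, (Fin.succ_ne_zero _).symm]
  | succ i =>
    induction j using Fin.cases with
    | zero =>
      simp [Fin.succ_ne_zero, (Fin.succ_ne_zero _).symm, Matrix.one_apply,
        Fin.succ_inj]
    | succ j =>
      simp [Fin.succ_ne_zero, (Fin.succ_ne_zero _).symm, Matrix.one_apply,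
        Fin.succ_inj]

lemma matB_eq_transpose (nu : Fin (n+2) → ℂ) :
    matB (by omega) nu = (matA (by omega) nu)ᵀ := by
  ext i j
  simp only [matB, matA, Matrix.transpose_apply, Matrix.of_apply, Fin.mk_zero]
  rcases eq_or_ne i j with rfl | h
  · simp
  · simp [h, Ne.symm h]

lemma matB'_eq_transpose (nu : Fin (n+2) → ℂ) :
    matB' nu = (matA' nu)ᵀ := by
  ext i j
  simp only [matB', matA', Matrix.transpose_apply, Matrix.of_apply]
  rcases eq_or_ne i j with rfl | h
  · simp
  · simp [h, Ne.symm h]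

lemma matB_mul_matB' (nu : Fin (n+2) → ℂ) :
    matB (by omega) nu * matB' nu = 1 := by
  rw [matB_eq_transpose, matB'_eq_transpose, ← Matrix.transpose_mul,
    mul_eq_one_comm.mp (matA_mul_matA' nu), Matrix.transpose_one]

lemma matA_mul_of_row_zero (lam : Fin (n+2) → ℂ) (v : Matrix (Fin (n+2)) (Fin (n+2)) ℂ)
    (hvrow : ∀ j, v 0 j = 0) :
    matA (by omega) lam * v = v := by
  ext i j
  rw [Matrix.mul_apply, Fin.sum_univ_succ]
  simp only [matA, Matrix.of_apply, Fin.mk_zero]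
  induction i using Fin.cases with
  | zero => simp [Fin.succ_ne_zero, (Fin.succ_ne_zero _).symm]
  | succ i =>
    simp [Fin.succ_ne_zero, (Fin.succ_ne_zero _).symm, Fin.succ_inj, hvrow]

lemma mul_matB_of_col_zero (nu : Fin (n+2) → ℂ) (v : Matrix (Fin (n+2)) (Fin (n+2)) ℂ)
    (hvcol : ∀ i, v i 0 = 0) :
    v * matB (by omega) nu = v := by
  have h := matA_mul_of_row_zero nu vᵀ (fun j => hvcol j)
  have h2 := congrArg Matrix.transpose h
  rw [Matrix.transpose_mul, Matrix.transpose_transpose] at h2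
  rw [matB_eq_transpose]
  exact h2

lemma matA_mul_M_mul_matB (lam nu : Fin (n+2) → ℂ)
    (hlam0 : lam 0 = 1) (hnu0 : nu 0 = 1) :
    matA (by omega) lam * Matrix.of (fun i j => (lam i)⁻¹ * (nu j)⁻¹) * matB (by omega) nu
      = matE n := by
  have step1 : matA (by omega) lam * Matrix.of (fun i j => (lam i)⁻¹ * (nu j)⁻¹)
      = Matrix.of (fun i j => if i = 0 then (nu j)⁻¹ else 0) := by
    ext i j
    rw [Matrix.mul_apply, Fin.sum_univ_succ]
    simp only [matA, Matrix.of_apply, Fin.mk_zero]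
    induction i using Fin.cases with
    | zero => simp [Fin.succ_ne_zero, (Fin.succ_ne_zero _).symm, hlam0]
    | succ i =>
      simp [Fin.succ_ne_zero, (Fin.succ_ne_zero _).symm, Fin.succ_inj, hlam0]
  rw [step1]
  ext i j
  rw [Matrix.mul_apply, Fin.sum_univ_succ]
  simp only [matB, matE, Matrix.of_apply, Fin.mk_zero]
  induction i using Fin.cases with
  | succ i => simp [Fin.succ_ne_zero]
  | zero =>
    induction j using Fin.cases with
    | zero => simp [Fin.succ_ne_zero, (Fin.succ_ne_zero _).symm, hnu0]
    | succ j =>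
      simp [Fin.succ_ne_zero, (Fin.succ_ne_zero _).symm, Fin.succ_inj, hnu0]

lemma lowerBlock_apply (v : Matrix (Fin (n+2)) (Fin (n+2)) ℂ) (i j : Fin (n+1)) :
    lowerBlock v i j = v i.succ j.succ := rfl

lemma matE_add_mul_matN (v : Matrix (Fin (n+2)) (Fin (n+2)) ℂ)
    (hvrow : ∀ j, v 0 j = 0) (hvcol : ∀ i, v i 0 = 0)
    (hv1 : IsUnit (lowerBlock v)) (s : ℂ) (hs : s ≠ 0) :
    (matE n + s • v) * matN (by omega) s (lowerBlock v)⁻¹ = 1 := by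
  have hinv : lowerBlock v * (lowerBlock v)⁻¹ = 1 :=
    Matrix.mul_nonsing_inv _ ((Matrix.isUnit_iff_isUnit_det _).mp hv1)
  ext i j
  rw [Matrix.mul_apply, Fin.sum_univ_succ]
  simp only [matE, matN, Matrix.add_apply, Matrix.smul_apply, Matrix.of_apply, smul_eq_mul]
  induction i using Fin.cases with
  | zero =>
    induction j using Fin.cases with
    | zero => simp [hvrow, Fin.succ_ne_zero, Fin.val_succ, Matrix.one_apply]
    | succ j =>
      simp [hvrow, Fin.succ_ne_zero, (Fin.succ_ne_zero _).symm, Fin.val_succ,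
        Matrix.one_apply]
  | succ i =>
    induction j using Fin.cases with
    | zero =>
      simp [Fin.succ_ne_zero, (Fin.succ_ne_zero _).symm, Matrix.one_apply, hvcol,
        Fin.val_succ]
    | succ j =>
      have key : ∀ k : Fin (n+1),
          (0 + s * v i.succ k.succ) *
            (s⁻¹ * (lowerBlock v)⁻¹ ⟨k.succ.1 - 1, by omega⟩ ⟨j.succ.1 - 1, by omega⟩)
          = lowerBlock v i k * (lowerBlock v)⁻¹ k j := by
        intro k
        rw [zero_add, lowerBlock_apply]
        have : (⟨k.succ.1 - 1, by omega⟩ : Fin (n+2-1)) = k := rfl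
        rw [this]
        have : (⟨j.succ.1 - 1, by omega⟩ : Fin (n+2-1)) = j := rfl
        rw [this]
        field_simp
      have hone : (1 : Matrix (Fin (n+2)) (Fin (n+2)) ℂ) i.succ j.succ
          = ∑ k : Fin (n+1), (0 + s * v i.succ k.succ) *
            (s⁻¹ * (lowerBlock v)⁻¹ ⟨k.succ.1 - 1, by omega⟩ ⟨j.succ.1 - 1, by omega⟩) := by
        rw [Finset.sum_congr rfl fun k _ => key k, ← Matrix.mul_apply, hinv]
        simp [Matrix.one_apply, Fin.succ_inj]
      rw [hone]
      simp [Fin.succ_ne_zero, Fin.val_succ, hvcol]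

end aux

/-- Proposition 2.1 (exact inversion formula): if `M_{i,j} = λ_i⁻¹ν_j⁻¹` with
`λ_0 = ν_0 = 1` and all coordinates nonzero, `v` has vanishing `0`th row and column, its
lower-right block `v₁` is invertible, and `s ≠ 0`, then `M + s • v` is invertible with
inverse `B * N * A`, where `N = diag(1, s⁻¹ v₁⁻¹)`. -/
theorem inv_hadamardInv_add_smul (q : ℕ) (hq : 2 ≤ q)
    (lam nu : Fin q → ℂ)
    (hlam0 : lam ⟨0, by omega⟩ = 1) (hnu0 : nu ⟨0, by omega⟩ = 1)
    (hlam : ∀ i, lam i ≠ 0) (hnu : ∀ j, nu j ≠ 0)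
    (v : Matrix (Fin q) (Fin q) ℂ)
    (hvrow : ∀ j, v ⟨0, by omega⟩ j = 0) (hvcol : ∀ i, v i ⟨0, by omega⟩ = 0)
    (hv1 : IsUnit (lowerBlock v))
    (s : ℂ) (hs : s ≠ 0) :
    IsUnit (Matrix.of (fun i j => (lam i)⁻¹ * (nu j)⁻¹) + s • v) ∧
    (Matrix.of (fun i j => (lam i)⁻¹ * (nu j)⁻¹) + s • v)⁻¹ =
      matB (by omega) nu * matN hq s (lowerBlock v)⁻¹ * matA (by omega) lam := by
  obtain ⟨n, rfl⟩ : ∃ n, q = n + 2 := ⟨q - 2, by omega⟩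
  have h0 : (⟨0, by omega⟩ : Fin (n+2)) = 0 := by ext; simp
  simp only [h0] at hlam0 hnu0 hvrow hvcol
  have hA'A : matA' lam * matA (by omega) lam = 1 :=
    mul_eq_one_comm.mp (matA_mul_matA' lam)
  have hB'B : matB' nu * matB (by omega) nu = 1 :=
    mul_eq_one_comm.mp (matB_mul_matB' nu)
  have hX : matA (by omega) lam *
      (Matrix.of (fun i j => (lam i)⁻¹ * (nu j)⁻¹) + s • v) * matB (by omega) nu
      = matE n + s • v := by
    rw [mul_add, add_mul, matA_mul_M_mul_matB lam nu hlam0 hnu0, Matrix.mul_smul,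
      Matrix.smul_mul, matA_mul_of_row_zero lam v hvrow, mul_matB_of_col_zero nu v hvcol]
  have hMdecomp : Matrix.of (fun i j => (lam i)⁻¹ * (nu j)⁻¹) + s • v
      = matA' lam * (matE n + s • v) * matB' nu := by
    have h2 : matA' lam * (matA (by omega) lam *
        (Matrix.of (fun i j => (lam i)⁻¹ * (nu j)⁻¹) + s • v) * matB (by omega) nu)
        * matB' nu
        = Matrix.of (fun i j => (lam i)⁻¹ * (nu j)⁻¹) + s • v := by
      simp only [← mul_assoc]
      rw [hA'A, one_mul, mul_assoc, matB_mul_matB' nu, mul_one]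
    rw [hX] at h2
    exact h2.symm
  have key : (Matrix.of (fun i j => (lam i)⁻¹ * (nu j)⁻¹) + s • v) *
      (matB (by omega) nu * matN hq s (lowerBlock v)⁻¹ * matA (by omega) lam) = 1 := by
    rw [hMdecomp]
    simp only [mul_assoc]
    rw [← Matrix.mul_assoc (matB' nu), hB'B, one_mul,
      ← Matrix.mul_assoc (matE n + s • v), matE_add_mul_matN v hvrow hvcol hv1 s hs, one_mul]
    exact hA'A
  constructor
  · rw [Matrix.isUnit_iff_isUnit_det]
    have hd := congrArg Matrix.det key
    rw [Matrix.det_mul, Matrix.det_one] at hd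
    exact IsUnit.of_mul_eq_one _ hd
  · exact Matrix.inv_eq_right_inv key
end

section
/- Let q ≥ 1, let t ∈ ℂ be nonzero, and let D be the q×q diagonal matrix with D_{0,0} = t and D_{i,i} = 1 for i ≠ 0. Let x be a q×q complex matrix with all entries nonzero and with Hadamard inverse J(x) invertible. Then D * x * D has all entries nonzero, J(D * x * D) = D⁻¹ * J(x) * D⁻¹ is invertible, and (J(D * x * D))⁻¹ = D * (J(x))⁻¹ * D. (This is the homogeneity property (4.4): K ∘ χ_t = χ_t ∘ K, where χ_t multiplies the first row and first column by t and K = I ∘ J.) -/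
/-- The Hadamard (entrywise) inverse of a matrix. -/
noncomputable def hadamardInv {q : ℕ} (x : Matrix (Fin q) (Fin q) ℂ) :
    Matrix (Fin q) (Fin q) ℂ :=
  Matrix.of fun i j => (x i j)⁻¹

/-- The diagonal matrix `D = χ_t` with `D_{0,0} = t` and `D_{i,i} = 1` for `i ≠ 0`. -/
noncomputable def matD {q : ℕ} (hq : 0 < q) (t : ℂ) : Matrix (Fin q) (Fin q) ℂ :=
  Matrix.diagonal fun i => if i = ⟨0, hq⟩ then t else 1

/-- The homogeneity property (4.4): for `t ≠ 0` and `x` with nonzero entries and invertible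
Hadamard inverse, `D * x * D` has nonzero entries, `J(D*x*D) = D⁻¹ * J(x) * D⁻¹` is
invertible, and `(J(D*x*D))⁻¹ = D * (J(x))⁻¹ * D`; that is, `K ∘ χ_t = χ_t ∘ K`. -/
theorem hadamardInv_conj_diagonal (q : ℕ) (hq : 0 < q)
    (t : ℂ) (ht : t ≠ 0)
    (x : Matrix (Fin q) (Fin q) ℂ)
    (hx : ∀ i j, x i j ≠ 0)
    (hJx : IsUnit (hadamardInv x)) :
    (∀ i j, (matD hq t * x * matD hq t) i j ≠ 0) ∧
    hadamardInv (matD hq t * x * matD hq t) = (matD hq t)⁻¹ * hadamardInv x * (matD hq t)⁻¹ ∧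
    IsUnit (hadamardInv (matD hq t * x * matD hq t)) ∧
    (hadamardInv (matD hq t * x * matD hq t))⁻¹ = matD hq t * (hadamardInv x)⁻¹ * matD hq t := by
  set d : Fin q → ℂ := fun i => if i = ⟨0, hq⟩ then t else 1 with hd
  have hdne : ∀ i, d i ≠ 0 := by
    intro i
    simp only [hd]
    split <;> simp [ht]
  have hentry : ∀ i j, (matD hq t * x * matD hq t) i j = d i * x i j * d j := by
    intro i j
    simp [matD, Matrix.mul_apply, Matrix.diagonal, Finset.sum_ite_eq, Finset.sum_ite_eq',
      ← hd]
    simp only [hd]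
    split <;> split <;> ring
  have hDinv : (matD hq t)⁻¹ = Matrix.diagonal fun i => (d i)⁻¹ := by
    apply Matrix.inv_eq_right_inv
    rw [matD, Matrix.diagonal_mul_diagonal]
    ext i j
    rcases eq_or_ne i j with rfl | hij
    · simp only [Matrix.diagonal_apply_eq, Matrix.one_apply_eq, ← hd]
      exact mul_inv_cancel₀ (hdne i)
    · simp [Matrix.diagonal_apply_ne _ hij, Matrix.one_apply_ne hij]
  have hne : ∀ i j, (matD hq t * x * matD hq t) i j ≠ 0 := by
    intro i j
    rw [hentry]
    exact mul_ne_zero (mul_ne_zero (hdne i) (hx i j)) (hdne j)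
  have hDunit : IsUnit (matD hq t) := by
    rw [Matrix.isUnit_iff_isUnit_det, matD, Matrix.det_diagonal]
    exact isUnit_iff_ne_zero.2 (Finset.prod_ne_zero_iff.2 fun i _ => hdne i)
  have hDinvunit : IsUnit (matD hq t)⁻¹ := Matrix.isUnit_nonsing_inv_iff.2 hDunit
  have heq : hadamardInv (matD hq t * x * matD hq t) =
      (matD hq t)⁻¹ * hadamardInv x * (matD hq t)⁻¹ := by
    ext i j
    rw [hDinv]
    simp [hadamardInv, hentry, Matrix.diagonal_mul, Matrix.mul_diagonal]
    ring
  refine ⟨hne, heq, ?_, ?_⟩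
  · rw [heq]
    exact (hDinvunit.mul hJx).mul hDinvunit
  · rw [heq, Matrix.mul_inv_rev, Matrix.mul_inv_rev,
      Matrix.nonsing_inv_nonsing_inv _ (Matrix.isUnit_iff_isUnit_det _ |>.1 hDunit),
      mul_assoc]
end

section
/- Let q ≥ 1. The 4-dimensional subspace S₁ of V spanned by the vectors h, r, Σ_{k,ℓ} a_{kℓ}, and Σ_{k,ℓ} b_{kℓ} is invariant under T; explicitly, T(Σ_{k,ℓ} a_{kℓ}) = q²·h − (2q−1)·Σ_{k,ℓ} a_{kℓ} − 2q·Σ_{k,ℓ} b_{kℓ} and T(Σ_{k,ℓ} b_{kℓ}) = Σ_{k,ℓ} a_{kℓ} + Σ_{k,ℓ} b_{kℓ}. -/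
/-- Index type for the basis `{h, r} ∪ {a_{ij}} ∪ {b_{ij}}` of `Pic(Z) ⊗ ℚ`. -/
abbrev PicIdx (q : ℕ) := Unit ⊕ Unit ⊕ (Fin q × Fin q) ⊕ (Fin q × Fin q)

noncomputable section

/-- The standard basis of the free `ℚ`-vector space `V = PicIdx q → ℚ`. -/
def picBasis (q : ℕ) : Module.Basis (PicIdx q) ℚ (PicIdx q → ℚ) := Pi.basisFun ℚ (PicIdx q)

/-- The basis vector `h` (the class of a hyperplane `H`). -/
def vh (q : ℕ) : PicIdx q → ℚ := picBasis q (Sum.inl ())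

/-- The basis vector `r` (the class of the exceptional divisor `R¹`). -/
def vr (q : ℕ) : PicIdx q → ℚ := picBasis q (Sum.inr (Sum.inl ()))

/-- The basis vector `a_{ij}` (the class of the exceptional divisor `A^{ij}`). -/
def va (q : ℕ) (i j : Fin q) : PicIdx q → ℚ := picBasis q (Sum.inr (Sum.inr (Sum.inl (i, j))))

/-- The basis vector `b_{ij}` (the class of the exceptional divisor `B^{ij}`). -/
def vb (q : ℕ) (i j : Fin q) : PicIdx q → ℚ := picBasis q (Sum.inr (Sum.inr (Sum.inr (i, j))))

/-- `Σ_{k,ℓ} a_{kℓ}`. -/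
def sa (q : ℕ) : PicIdx q → ℚ := ∑ p : Fin q × Fin q, va q p.1 p.2

/-- `Σ_{k,ℓ} b_{kℓ}`. -/
def sb (q : ℕ) : PicIdx q → ℚ := ∑ p : Fin q × Fin q, vb q p.1 p.2

/-- The linear map `T = K*` on `Pic(Z) ⊗ ℚ` of Proposition 6.1, determined on the basis by
`T h = (q²−q+1)h − (q−2)r − (2q−3)Σa − (2q−2)Σb`,
`T r = (q²−q)h − (q−1)r − (2q−3)Σa − (2q−2)Σb`,
`T a_{ij} = h − b_{ji} − Σ_{(k,ℓ) : k=j ∨ ℓ=i}(a_{kℓ} + b_{kℓ})`, and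
`T b_{ij} = a_{ji} + b_{ji}`. -/
def Tpic (q : ℕ) : (PicIdx q → ℚ) →ₗ[ℚ] (PicIdx q → ℚ) :=
  (picBasis q).constr ℚ fun idx =>
    match idx with
    | Sum.inl _ =>
        ((q : ℚ) ^ 2 - q + 1) • vh q - ((q : ℚ) - 2) • vr q
          - (2 * (q : ℚ) - 3) • sa q - (2 * (q : ℚ) - 2) • sb q
    | Sum.inr (Sum.inl _) =>
        ((q : ℚ) ^ 2 - q) • vh q - ((q : ℚ) - 1) • vr q
          - (2 * (q : ℚ) - 3) • sa q - (2 * (q : ℚ) - 2) • sb q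
    | Sum.inr (Sum.inr (Sum.inl (i, j))) =>
        vh q - vb q j i
          - ∑ p ∈ Finset.univ.filter (fun p : Fin q × Fin q => p.1 = j ∨ p.2 = i),
              (va q p.1 p.2 + vb q p.1 p.2)
    | Sum.inr (Sum.inr (Sum.inr (i, j))) => va q j i + vb q j i

end


section Aux

open Finset

lemma Tpic_vh (q : ℕ) : Tpic q (vh q) =
    ((q : ℚ) ^ 2 - q + 1) • vh q - ((q : ℚ) - 2) • vr q
      - (2 * (q : ℚ) - 3) • sa q - (2 * (q : ℚ) - 2) • sb q := by
  simp [Tpic, vh, Module.Basis.constr_basis]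

lemma Tpic_vr (q : ℕ) : Tpic q (vr q) =
    ((q : ℚ) ^ 2 - q) • vh q - ((q : ℚ) - 1) • vr q
      - (2 * (q : ℚ) - 3) • sa q - (2 * (q : ℚ) - 2) • sb q := by
  simp [Tpic, vr, Module.Basis.constr_basis]

lemma Tpic_va (q : ℕ) (i j : Fin q) : Tpic q (va q i j) =
    vh q - vb q j i
      - ∑ p ∈ Finset.univ.filter (fun p : Fin q × Fin q => p.1 = j ∨ p.2 = i),
          (va q p.1 p.2 + vb q p.1 p.2) := by
  simp [Tpic, va, Module.Basis.constr_basis]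

lemma Tpic_vb (q : ℕ) (i j : Fin q) : Tpic q (vb q i j) = va q j i + vb q j i := by
  simp [Tpic, vb, Module.Basis.constr_basis]


lemma Tpic_sb' (q : ℕ) : Tpic q (sb q) = sa q + sb q := by
  unfold sb
  rw [map_sum]
  simp_rw [Tpic_vb]
  rw [Finset.sum_add_distrib]
  congr 1
  · rw [sa]
    exact Fintype.sum_equiv (Equiv.prodComm _ _) _ _ (fun x => rfl)
  · exact Fintype.sum_equiv (Equiv.prodComm _ _) _ _ (fun x => rfl)

lemma card_cross (q : ℕ) (k l : Fin q) :
    (Finset.univ.filter (fun x : Fin q × Fin q => k = x.2 ∨ l = x.1)).card = 2 * q - 1 := by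
  have he : Finset.univ.filter (fun x : Fin q × Fin q => k = x.2 ∨ l = x.1)
      = (Finset.univ ×ˢ {k}) ∪ ({l} ×ˢ Finset.univ) := by
    ext x
    simp only [Finset.mem_filter, Finset.mem_univ, true_and, Finset.mem_union,
      Finset.mem_product, Finset.mem_singleton]
    tauto
  have hi : (Finset.univ ×ˢ ({k} : Finset (Fin q))) ∩ (({l} : Finset (Fin q)) ×ˢ Finset.univ)
      = {(l, k)} := by
    ext x
    simp only [Finset.mem_inter, Finset.mem_product, Finset.mem_singleton, Finset.mem_univ,
      true_and, and_true, Prod.ext_iff]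
    tauto
  rw [he, Finset.card_union, hi]
  simp
  omega

lemma Tpic_sa' (q : ℕ) (hq : 1 ≤ q) : Tpic q (sa q) =
    ((q : ℚ) ^ 2) • vh q - (2 * (q : ℚ) - 1) • sa q - (2 * (q : ℚ)) • sb q := by
  unfold sa
  rw [map_sum]
  simp_rw [Tpic_va]
  rw [Finset.sum_sub_distrib, Finset.sum_sub_distrib]
  have h1 : ∑ _x : Fin q × Fin q, vh q = ((q * q : ℕ) : ℚ) • vh q := by
    rw [Finset.sum_const]
    simp [← Nat.cast_smul_eq_nsmul ℚ]
  have h2 : ∑ x : Fin q × Fin q, vb q x.2 x.1 = sb q := by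
    rw [sb]
    exact Fintype.sum_equiv (Equiv.prodComm _ _) _ _ (fun x => rfl)
  have h3 : ∑ x : Fin q × Fin q,
      ∑ p ∈ Finset.univ.filter (fun p : Fin q × Fin q => p.1 = x.2 ∨ p.2 = x.1),
        (va q p.1 p.2 + vb q p.1 p.2)
      = ((2 * q - 1 : ℕ) : ℚ) • (sa q + sb q) := by
    simp_rw [Finset.sum_filter]
    rw [Finset.sum_comm]
    have : ∀ p : Fin q × Fin q,
        (∑ x : Fin q × Fin q, if p.1 = x.2 ∨ p.2 = x.1 then va q p.1 p.2 + vb q p.1 p.2 else 0)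
        = ((2 * q - 1 : ℕ) : ℚ) • (va q p.1 p.2 + vb q p.1 p.2) := by
      intro p
      rw [← Finset.sum_filter, Finset.sum_const, card_cross]
      simp [← Nat.cast_smul_eq_nsmul ℚ]
    simp_rw [this]
    rw [← Finset.smul_sum, Finset.sum_add_distrib, ← sa, ← sb]
  rw [h1, h2, h3]
  have hc : ((2 * q - 1 : ℕ) : ℚ) = 2 * (q : ℚ) - 1 := by
    have : 1 ≤ 2 * q := by omega
    push_cast [this]
    ring
  have hc2 : ((q * q : ℕ) : ℚ) = (q : ℚ) ^ 2 := by push_cast; ring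
  rw [hc, hc2, show (∑ p : Fin q × Fin q, va q p.1 p.2) = sa q from rfl]
  module

end Aux

/-- The subspace `S₁ = span{h, r, Σa, Σb}` is `T`-invariant, with
`T(Σa) = q²·h − (2q−1)·Σa − 2q·Σb` and `T(Σb) = Σa + Σb`. -/
theorem Tpic_invariant_S1 (q : ℕ) (hq : 1 ≤ q) :
    (∀ x ∈ Submodule.span ℚ {vh q, vr q, sa q, sb q},
        Tpic q x ∈ Submodule.span ℚ {vh q, vr q, sa q, sb q}) ∧
    Tpic q (sa q) = ((q : ℚ) ^ 2) • vh q - (2 * (q : ℚ) - 1) • sa q - (2 * (q : ℚ)) • sb q ∧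
    Tpic q (sb q) = sa q + sb q := by
  refine ⟨?_, Tpic_sa' q hq, Tpic_sb' q⟩
  have mh : vh q ∈ Submodule.span ℚ ({vh q, vr q, sa q, sb q} : Set (PicIdx q → ℚ)) :=
    Submodule.subset_span (by simp)
  have mr : vr q ∈ Submodule.span ℚ ({vh q, vr q, sa q, sb q} : Set (PicIdx q → ℚ)) :=
    Submodule.subset_span (by simp)
  have ma : sa q ∈ Submodule.span ℚ ({vh q, vr q, sa q, sb q} : Set (PicIdx q → ℚ)) :=
    Submodule.subset_span (by simp)
  have mb : sb q ∈ Submodule.span ℚ ({vh q, vr q, sa q, sb q} : Set (PicIdx q → ℚ)) :=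
    Submodule.subset_span (by simp)
  have hgen : ∀ v ∈ ({vh q, vr q, sa q, sb q} : Set (PicIdx q → ℚ)),
      Tpic q v ∈ Submodule.span ℚ ({vh q, vr q, sa q, sb q} : Set (PicIdx q → ℚ)) := by
    intro v hv
    simp only [Set.mem_insert_iff, Set.mem_singleton_iff] at hv
    rcases hv with rfl | rfl | rfl | rfl
    · rw [Tpic_vh]
      exact sub_mem (sub_mem (sub_mem (Submodule.smul_mem _ _ mh) (Submodule.smul_mem _ _ mr))
        (Submodule.smul_mem _ _ ma)) (Submodule.smul_mem _ _ mb)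
    · rw [Tpic_vr]
      exact sub_mem (sub_mem (sub_mem (Submodule.smul_mem _ _ mh) (Submodule.smul_mem _ _ mr))
        (Submodule.smul_mem _ _ ma)) (Submodule.smul_mem _ _ mb)
    · rw [Tpic_sa' q hq]
      exact sub_mem (sub_mem (Submodule.smul_mem _ _ mh) (Submodule.smul_mem _ _ ma))
        (Submodule.smul_mem _ _ mb)
    · rw [Tpic_sb' q]
      exact add_mem ma mb
  intro x hx
  induction hx using Submodule.span_induction with
  | mem v hv => exact hgen v hv
  | zero => simpa using (Submodule.span ℚ ({vh q, vr q, sa q, sb q} : Set (PicIdx q → ℚ))).zero_mem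
  | add x y _ _ hx hy => rw [map_add]; exact add_mem hx hy
  | smul c x _ hx => rw [map_smul]; exact Submodule.smul_mem _ _ hx
end

section
/- Let q ≥ 2 and let M₁ be the 4×4 matrix over ℚ whose columns (the images of the basis vectors h, r, Σa, Σb of the invariant subspace S₁ under T) are: first column (q²−q+1, −(q−2), −(2q−3), −(2q−2)); second column (q²−q, −(q−1), −(2q−3), −(2q−2)); third column (q², 0, −(2q−1), −2q); fourth column (0, 0, 1, 1). Then the characteristic polynomial of M₁ equals (X² − (q² − 4q + 2)X + 1) · (X − 1)². -/
set_option maxHeartbeats 1600000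

open Polynomial in
/-- The characteristic polynomial of the matrix `M₁` of `K*` restricted to the invariant
subspace `S₁ = span{H, R¹, Σ A^{ij}, Σ B^{ij}}` (columns are the images of the four basis
vectors) is `(X² − (q²−4q+2)X + 1)·(X−1)²`. -/
theorem charpoly_M1 (q : ℕ) (hq : 2 ≤ q) :
    Matrix.charpoly
      !![(q : ℚ) ^ 2 - q + 1, (q : ℚ) ^ 2 - q,     (q : ℚ) ^ 2,        0;
         -((q : ℚ) - 2),      -((q : ℚ) - 1),      0,                  0;
         -(2 * (q : ℚ) - 3),  -(2 * (q : ℚ) - 3),  -(2 * (q : ℚ) - 1), 1;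
         -(2 * (q : ℚ) - 2),  -(2 * (q : ℚ) - 2),  -(2 * (q : ℚ)),     1] =
      (X ^ 2 - C ((q : ℚ) ^ 2 - 4 * q + 2) * X + 1) * (X - 1) ^ 2 := by
  rw [Matrix.charpoly]
  have h : Matrix.charmatrix
      !![(q : ℚ) ^ 2 - q + 1, (q : ℚ) ^ 2 - q,     (q : ℚ) ^ 2,        0;
         -((q : ℚ) - 2),      -((q : ℚ) - 1),      0,                  0;
         -(2 * (q : ℚ) - 3),  -(2 * (q : ℚ) - 3),  -(2 * (q : ℚ) - 1), 1;
         -(2 * (q : ℚ) - 2),  -(2 * (q : ℚ) - 2),  -(2 * (q : ℚ)),     1] =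
      !![X - C ((q : ℚ) ^ 2 - q + 1), -C ((q : ℚ) ^ 2 - q), -C ((q : ℚ) ^ 2), 0;
         C ((q : ℚ) - 2), X + C ((q : ℚ) - 1), 0, 0;
         C (2 * (q : ℚ) - 3), C (2 * (q : ℚ) - 3), X + C (2 * (q : ℚ) - 1), -1;
         C (2 * (q : ℚ) - 2), C (2 * (q : ℚ) - 2), C (2 * (q : ℚ)), X - 1] := by
    ext i j : 2
    fin_cases i <;> fin_cases j <;>
      simp [Matrix.charmatrix_apply, Matrix.diagonal, Matrix.vecHead, Matrix.vecTail] <;> ring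
  rw [h]
  simp [Matrix.det_succ_row_zero, Fin.sum_univ_succ, Fin.succAbove, map_sub, map_add, map_mul, map_pow, map_ofNat, map_one]
  ring
end
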